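/- arXiv:2510.00331 — 2 statements merged into one kernel-verified Lean document; each statement's English description precedes it below -/
import Mathlib

section
/- Let e=(u,y) be an edge with u <_X median(y), and suppose y has a neighbor x with median(y) <_X x. Then in the median heuristic's drawing, every edge crossing e either crosses the median edge (median(y), y) or is an intrusive edge for the valley ⟨u, y, x⟩. Consequently, if the median edge of y has at most k crossings and the valley has at most 2k intrusive edges, then e has at most 3k crossings. -/
open scoped Classical

/-! Let `m = median y` and let `f` cross `(u, y)`. If `f.1 < u`, then `f.1 < m` and `f` crosses
`(m, y)` as well. If `u < f.1` (so `f.2 < y`), either `f.1 < x` and `f` is intrusive for the valley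
`⟨u, y, x⟩`, or `m < x ≤ f.1` and `f` again crosses `(m, y)`. The count is then a
union bound. -/

def Crosses {X Y : Type*} [LT X] [LT Y] (e f : X × Y) : Prop :=
  (e.1 < f.1 ∧ f.2 < e.2) ∨ (f.1 < e.1 ∧ e.2 < f.2)

theorem Crosses.crosses_or_intrusive {X Y : Type*} [LinearOrder X] [Preorder Y]
    {u m x : X} {y : Y} {f : X × Y} (hum : u < m) (hmx : m < x) (h : Crosses (u, y) f) :
    Crosses (m, y) f ∨ (f.2 ≠ y ∧ u < f.1 ∧ f.1 < x) := by
  rcases h with ⟨huf, hfy⟩ | ⟨hfu, hyf⟩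
  · rcases lt_or_ge f.1 x with hfx | hxf
    · exact Or.inr ⟨hfy.ne, huf, hfx⟩
    · exact Or.inl (Or.inl ⟨hmx.trans_le hxf, hfy⟩)
  · exact Or.inl (Or.inr ⟨hfu.trans hum, hyf⟩)

theorem Finset.card_filter_le_card_filter_add_card_filter {α : Type*} {s : Finset α}
    {p q r : α → Prop} [DecidablePred p] [DecidablePred q] [DecidablePred r]
    (h : ∀ a ∈ s, p a → q a ∨ r a) :
    (s.filter p).card ≤ (s.filter q).card + (s.filter r).card :=
  calc (s.filter p).card ≤ (s.filter fun a => q a ∨ r a).card :=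
        card_le_card (monotone_filter_right s h)
    _ ≤ (s.filter q).card + (s.filter r).card := by
        rw [filter_or]
        exact card_union_le _ _

theorem light_edge_crossing_bound_general
    {X Y : Type*} [LinearOrder X] [LinearOrder Y]
    (E : Finset (X × Y)) (median : Y → X)
    (cross : X × Y → X × Y → Prop)
    (hcross : ∀ e f : X × Y,
      cross e f ↔ ((e.1 < f.1 ∧ f.2 < e.2) ∨ (f.1 < e.1 ∧ e.2 < f.2)))
    (u x : X) (y : Y) (hu : u < median y)
    (hxr : median y < x) (k : ℕ) :
    (∀ f ∈ E, cross (u, y) f →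
      cross (median y, y) f ∨ (f.2 ≠ y ∧ u < f.1 ∧ f.1 < x)) ∧
    ((E.filter (fun f => cross (median y, y) f)).card ≤ k →
      (E.filter (fun f => f.2 ≠ y ∧ u < f.1 ∧ f.1 < x)).card ≤ 2 * k →
      (E.filter (fun f => cross (u, y) f)).card ≤ 3 * k) := by
  obtain rfl : cross = Crosses := funext₂ fun e f => propext (hcross e f)
  have hsplit : ∀ f ∈ E, Crosses (u, y) f →
      Crosses (median y, y) f ∨ (f.2 ≠ y ∧ u < f.1 ∧ f.1 < x) :=
    fun _ _ h => h.crosses_or_intrusive hu hxr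
  refine ⟨hsplit, fun hmed hvalley => ?_⟩
  calc (E.filter (Crosses (u, y))).card
      ≤ (E.filter (Crosses (median y, y))).card
        + (E.filter fun f => f.2 ≠ y ∧ u < f.1 ∧ f.1 < x).card :=
        Finset.card_filter_le_card_filter_add_card_filter hsplit
    _ ≤ k + 2 * k := Nat.add_le_add hmed hvalley
    _ = 3 * k := by ring

/-- Let `e = (u, y)` be an edge with `u <ₓ median y`, and suppose `y` has a neighbor
`x` with `median y <ₓ x`.  In the drawing produced by the median heuristic (any
linear order on `Y` extending the median order), every edge crossing `e` either
crosses the median edge `(median y, y)` or is an intrusive edge for the valley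
`⟨u, y, x⟩`.  Consequently, if the median edge of `y` has at most `k` crossings and
the valley has at most `2k` intrusive edges, then `e` has at most `3k` crossings. -/
theorem light_edge_crossing_bound
    {X Y : Type*} [LinearOrder X] [LinearOrder Y]
    (E : Finset (X × Y)) (median : Y → X)
    (hmedadj : ∀ y : Y, (median y, y) ∈ E)
    (hext : ∀ y₁ y₂ : Y, median y₁ < median y₂ → y₁ < y₂)
    (cross : X × Y → X × Y → Prop)
    (hcross : ∀ e f : X × Y,
      cross e f ↔ ((e.1 < f.1 ∧ f.2 < e.2) ∨ (f.1 < e.1 ∧ e.2 < f.2)))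
    (u x : X) (y : Y) (he : (u, y) ∈ E) (hu : u < median y)
    (hx : (x, y) ∈ E) (hxr : median y < x) (k : ℕ) :
    (∀ f ∈ E, cross (u, y) f →
      cross (median y, y) f ∨ (f.2 ≠ y ∧ u < f.1 ∧ f.1 < x)) ∧
    ((E.filter (fun f => cross (median y, y) f)).card ≤ k →
      (E.filter (fun f => f.2 ≠ y ∧ u < f.1 ∧ f.1 < x)).card ≤ 2 * k →
      (E.filter (fun f => cross (u, y) f)).card ≤ 3 * k) :=
  light_edge_crossing_bound_general E median cross hcross u x y hu hxr k
end

section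
/- If the one-sided local crossing number of (G, <_X) is k, then the 2-layer drawing returned by the median heuristic variant A has local crossing number at most 3k, i.e., variant A is a 3-approximation for One-Sided Local Crossing Minimization. -/
/-!
Fix an optimal order `σ` of `Y` and an edge `(x, y)`. Only the edges at a vertex `u` that `σ`
and variant A place on different sides of `y` can cross `(x, y)` more often in the variant-A
drawing. Variant A puts `u` before `y` only if `med u ≤ med y`, and a median splits the
neighbours of `u` almost evenly, so the edges of `u` crossing `(x, y)` are outnumbered by those
crossing `(x, y)`, `(a, y)` or `(b, y)` in the drawing by `σ`: here `a = b` is the last neighbour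
of `y` if `x < med y`, the first one if `med y < x`, and `a = x`, `b` the first neighbour if
`x = med y`. Equal medians are where the tie-breaking matters: 2-vertices, whose median is
rounded up, must come first.
-/

open scoped Classical

/-- Edges `e` and `f` cross in the 2-layer drawing where `Y` is ordered by the
position map `ord` (i.e. `y₁ <ᵧ y₂ ↔ ord y₁ < ord y₂`). -/
def tlCross {X Y : Type*} [LinearOrder X] (ord : Y → ℕ) (e f : X × Y) : Prop :=
  (e.1 < f.1 ∧ ord f.2 < ord e.2) ∨ (f.1 < e.1 ∧ ord e.2 < ord f.2)

/-- Number of edges of `E` crossing the edge `e` in the drawing given by `ord`. -/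
noncomputable def tlCrN {X Y : Type*} [LinearOrder X] (E : Finset (X × Y))
    (ord : Y → ℕ) (e : X × Y) : ℕ :=
  (E.filter (tlCross ord e)).card

/-- Local crossing number of the drawing of `E` given by `ord`: the maximum,
over all edges, of the number of edges crossing it. -/
noncomputable def tlLcr {X Y : Type*} [LinearOrder X] (E : Finset (X × Y))
    (ord : Y → ℕ) : ℕ :=
  E.sup (tlCrN E ord)

/-- Neighborhood in `X` of a vertex `y ∈ Y`. -/
noncomputable def tlNbrs {X Y : Type*} (E : Finset (X × Y)) (y : Y) : Finset X :=
  (E.filter (fun q => q.2 = y)).image Prod.fst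

/-- Degree of a vertex `y ∈ Y`. -/
noncomputable def tlDeg {X Y : Type*} (E : Finset (X × Y)) (y : Y) : ℕ :=
  (tlNbrs E y).card

/-- Tie-breaking rank of `y`: `0` for 2-vertices, `1` for odd vertices, `2` for
`4⁺`-vertices (even degree `≥ 4`). -/
noncomputable def tlRank {X Y : Type*} (E : Finset (X × Y)) (y : Y) : ℕ :=
  if tlDeg E y = 2 then 0 else if Odd (tlDeg E y) then 1 else 2

/-- `med` is the median assignment of variant `A`: `med y` is a neighbor of `y`;
for a 2-vertex the median is rounded up (it is the second neighbor, with exactly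
one neighbor before it), otherwise it is rounded down (the middle neighbor, with
exactly `⌈deg y / 2⌉ - 1` neighbors before it). -/
def tlMedianA {X Y : Type*} [LinearOrder X] (E : Finset (X × Y)) (med : Y → X) : Prop :=
  ∀ y : Y, med y ∈ tlNbrs E y ∧
    (if tlDeg E y = 2 then ((tlNbrs E y).filter (fun w => w < med y)).card = 1
     else ((tlNbrs E y).filter (fun w => w < med y)).card + 1 = (tlDeg E y + 1) / 2)

/-- `ordA` is an order of `Y` produced by variant `A` of the median heuristic:
vertices are ordered by their medians; within a bunch, 2-vertices come first,
sorted ascending by their heavy neighbors `heavy`, then odd vertices, then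
`4⁺`-vertices sorted ascending by degree. -/
def tlVariantA {X Y : Type*} [LinearOrder X] (E : Finset (X × Y))
    (med heavy : Y → X) (ordA : Y → ℕ) : Prop :=
  Function.Injective ordA ∧
  (∀ y₁ y₂ : Y, med y₁ < med y₂ → ordA y₁ < ordA y₂) ∧
  (∀ y₁ y₂ : Y, med y₁ = med y₂ → tlRank E y₁ < tlRank E y₂ → ordA y₁ < ordA y₂) ∧
  (∀ y₁ y₂ : Y, med y₁ = med y₂ → tlDeg E y₁ = 2 → tlDeg E y₂ = 2 →
    heavy y₁ < heavy y₂ → ordA y₁ < ordA y₂) ∧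
  (∀ y₁ y₂ : Y, med y₁ = med y₂ → tlRank E y₁ = 2 → tlRank E y₂ = 2 →
    tlDeg E y₁ < tlDeg E y₂ → ordA y₁ < ordA y₂)

/-- `heavy` assigns to every 2-vertex its heavy neighbor: the unique neighbor
distinct from its median. -/
def tlHeavyNbr {X Y : Type*} [LinearOrder X] (E : Finset (X × Y))
    (med heavy : Y → X) : Prop :=
  ∀ y : Y, tlDeg E y = 2 → heavy y ∈ tlNbrs E y ∧ heavy y ≠ med y

/-- The one-sided local crossing number of `(E, <ₓ)` is `k`: `k` is the minimum,
over all orders of `Y` (injective position maps), of the local crossing number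
of the resulting drawing. -/
def tlOslcr {X Y : Type*} [LinearOrder X] (E : Finset (X × Y)) (k : ℕ) : Prop :=
  IsLeast {m : ℕ | ∃ ord : Y → ℕ, Function.Injective ord ∧ tlLcr E ord = m} k

open Finset Function

section Neighbours

variable {X Y : Type*}

lemma mem_tlNbrs {E : Finset (X × Y)} {w : X} {u : Y} : w ∈ tlNbrs E u ↔ (w, u) ∈ E := by
  simp [tlNbrs]

lemma card_filter_snd_eq_card_tlNbrs_filter (E : Finset (X × Y)) (P : X → Prop) [DecidablePred P] (u : Y) :
    #(E.filter fun f => P f.1 ∧ f.2 = u) = #((tlNbrs E u).filter P) := by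
  rw [tlNbrs, filter_image, filter_filter, card_image_of_injOn]
  · congr 1
    exact filter_congr fun f _ => and_comm
  · intro f hf g hg hfg
    rw [mem_coe, mem_filter] at hf hg
    exact Prod.ext hfg (hf.2.1.trans hg.2.1.symm)

lemma tlRank_eq_zero_iff {E : Finset (X × Y)} {u : Y} : tlRank E u = 0 ↔ tlDeg E u = 2 := by
  unfold tlRank
  split_ifs <;> simp_all

variable [LinearOrder X] (E : Finset (X × Y))

noncomputable def tlLeftDeg (z : X) (u : Y) : ℕ := #((tlNbrs E u).filter (· < z))

noncomputable def tlRightDeg (z : X) (u : Y) : ℕ := #((tlNbrs E u).filter (z < ·))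

lemma tlLeftDeg_le_tlDeg (z : X) (u : Y) : tlLeftDeg E z u ≤ tlDeg E u := card_filter_le _ _

lemma tlRightDeg_le_tlDeg (z : X) (u : Y) : tlRightDeg E z u ≤ tlDeg E u := card_filter_le _ _

lemma tlLeftDeg_mono {z z' : X} (u : Y) (h : z ≤ z') : tlLeftDeg E z u ≤ tlLeftDeg E z' u :=
  card_le_card <| monotone_filter_right _ fun _ _ hw => hw.trans_le h

lemma tlRightDeg_anti {z z' : X} (u : Y) (h : z ≤ z') : tlRightDeg E z' u ≤ tlRightDeg E z u :=
  card_le_card <| monotone_filter_right _ fun _ _ hw => h.trans_lt hw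

variable {E}

lemma tlLeftDeg_lt_of_lt {a z : X} {u : Y} (ha : a ∈ tlNbrs E u) (h : a < z) :
    tlLeftDeg E a u < tlLeftDeg E z u := by
  refine card_lt_card <| (ssubset_iff_of_subset ?_).2 ⟨a, ?_, ?_⟩
  · exact monotone_filter_right _ fun _ _ hw => hw.trans h
  · exact mem_filter.2 ⟨ha, h⟩
  · simp

lemma tlRightDeg_lt_of_lt {a z : X} {u : Y} (ha : a ∈ tlNbrs E u) (h : z < a) :
    tlRightDeg E a u < tlRightDeg E z u := by
  refine card_lt_card <| (ssubset_iff_of_subset ?_).2 ⟨a, ?_, ?_⟩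
  · exact monotone_filter_right _ fun _ _ hw => h.trans hw
  · exact mem_filter.2 ⟨ha, h⟩
  · simp

lemma tlLeftDeg_eq_zero {z : X} {u : Y} (h : ∀ w ∈ tlNbrs E u, z ≤ w) : tlLeftDeg E z u = 0 :=
  card_eq_zero.2 <| filter_eq_empty_iff.2 fun w hw => not_lt.2 (h w hw)

lemma tlRightDeg_eq_zero {z : X} {u : Y} (h : ∀ w ∈ tlNbrs E u, w ≤ z) : tlRightDeg E z u = 0 :=
  card_eq_zero.2 <| filter_eq_empty_iff.2 fun w hw => not_lt.2 (h w hw)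

lemma tlLeftDeg_add_tlRightDeg {a : X} {u : Y} (ha : a ∈ tlNbrs E u) :
    tlLeftDeg E a u + tlRightDeg E a u + 1 = tlDeg E u := by
  have hsplit : (tlNbrs E u).filter (¬ · < a) = insert a ((tlNbrs E u).filter (a < ·)) := by
    ext w
    simp only [mem_filter, mem_insert, not_lt, le_iff_eq_or_lt]
    grind
  have := card_filter_add_card_filter_not (s := tlNbrs E u) (· < a)
  rw [hsplit, card_insert_of_notMem (by simp)] at this
  rw [tlLeftDeg, tlRightDeg, tlDeg]
  omega

end Neighbours

section Crossings

variable {X Y : Type*} [LinearOrder X] (E : Finset (X × Y))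

noncomputable def tlCrossAt (ord : Y → ℕ) (e : X × Y) (u : Y) : ℕ :=
  #(E.filter fun f => tlCross ord e f ∧ f.2 = u)

lemma tlCrN_eq_sum_tlCrossAt (ord : Y → ℕ) (e : X × Y) :
    tlCrN E ord e = ∑ u ∈ E.image Prod.snd, tlCrossAt E ord e u := by
  rw [tlCrN, card_eq_sum_card_fiberwise (f := Prod.snd) fun f hf =>
    mem_image_of_mem _ (mem_filter.1 hf).1]
  simp only [filter_filter, tlCrossAt]

variable {E} {ord : Y → ℕ} {x : X} {y u : Y}

lemma tlCrossAt_of_lt (h : ord u < ord y) : tlCrossAt E ord (x, y) u = tlRightDeg E x u := by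
  rw [tlCrossAt, tlRightDeg, ← card_filter_snd_eq_card_tlNbrs_filter]
  congr 1
  refine filter_congr fun f _ => ?_
  constructor
  · rintro ⟨(hc | hc), rfl⟩
    exacts [⟨hc.1, rfl⟩, absurd h hc.2.asymm]
  · rintro ⟨hx, rfl⟩
    exact ⟨Or.inl ⟨hx, h⟩, rfl⟩

lemma tlCrossAt_of_gt (h : ord y < ord u) : tlCrossAt E ord (x, y) u = tlLeftDeg E x u := by
  rw [tlCrossAt, tlLeftDeg, ← card_filter_snd_eq_card_tlNbrs_filter]
  congr 1
  refine filter_congr fun f _ => ?_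
  constructor
  · rintro ⟨(hc | hc), rfl⟩
    exacts [absurd h hc.2.asymm, ⟨hc.1, rfl⟩]
  · rintro ⟨hx, rfl⟩
    exact ⟨Or.inr ⟨hx, h⟩, rfl⟩

lemma tlCrossAt_of_eq (h : ord u = ord y) : tlCrossAt E ord (x, y) u = 0 := by
  refine card_eq_zero.2 <| filter_eq_empty_iff.2 ?_
  rintro f - ⟨(hc | hc), rfl⟩
  exacts [hc.2.ne h, hc.2.ne' h]

end Crossings

section Charging

variable {X Y : Type*} [LinearOrder X] (E : Finset (X × Y))

/-- The crossings of `(x, y)` with the edges at `u` are outnumbered by the crossings of `(x, y)`,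
`(a, y)` and `(b, y)` with them once `u` is moved to the other side of `y`. -/
def tlChargeable (ord : Y → ℕ) (y : Y) (x a b : X) : Prop :=
  ∀ u : Y,
    (ord u < ord y →
      tlRightDeg E x u ≤ tlLeftDeg E x u + tlLeftDeg E a u + tlLeftDeg E b u) ∧
    (ord y < ord u →
      tlLeftDeg E x u ≤ tlRightDeg E x u + tlRightDeg E a u + tlRightDeg E b u)

variable {E} {ord σ : Y → ℕ} {y : Y} {x a b : X}

lemma tlCrossAt_le_of_tlChargeable (hσ : Injective σ) (h : tlChargeable E ord y x a b) (u : Y) :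
    tlCrossAt E ord (x, y) u ≤
      tlCrossAt E σ (x, y) u + tlCrossAt E σ (a, y) u + tlCrossAt E σ (b, y) u := by
  obtain ⟨hleft, hright⟩ := h u
  rcases lt_trichotomy (ord u) (ord y) with hu | hu | hu
  · have hσu : σ u ≠ σ y := hσ.ne (ne_of_apply_ne ord hu.ne)
    rw [tlCrossAt_of_lt hu]
    rcases hσu.lt_or_gt with hs | hs
    · simp only [tlCrossAt_of_lt hs]
      omega
    · simpa only [tlCrossAt_of_gt hs] using hleft hu
  · simp [tlCrossAt_of_eq hu]
  · have hσu : σ u ≠ σ y := hσ.ne (ne_of_apply_ne ord hu.ne')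
    rw [tlCrossAt_of_gt hu]
    rcases hσu.lt_or_gt with hs | hs
    · simpa only [tlCrossAt_of_lt hs] using hright hu
    · simp only [tlCrossAt_of_gt hs]
      omega

lemma tlCrN_le_of_tlChargeable (hσ : Injective σ) (h : tlChargeable E ord y x a b) :
    tlCrN E ord (x, y) ≤ tlCrN E σ (x, y) + tlCrN E σ (a, y) + tlCrN E σ (b, y) := by
  simp only [tlCrN_eq_sum_tlCrossAt, ← sum_add_distrib]
  exact sum_le_sum fun u _ => tlCrossAt_le_of_tlChargeable hσ h u

end Charging

section Median

variable {X Y : Type*} [LinearOrder X] {E : Finset (X × Y)} {med : Y → X}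

namespace tlMedianA

lemma tlLeftDeg_add_tlRightDeg (hmed : tlMedianA E med) (u : Y) :
    tlLeftDeg E (med u) u + tlRightDeg E (med u) u + 1 = tlDeg E u :=
  _root_.tlLeftDeg_add_tlRightDeg (hmed u).1

lemma balance (hmed : tlMedianA E med) (u : Y) :
    (tlDeg E u = 2 ∧ tlLeftDeg E (med u) u = 1 ∧ tlRightDeg E (med u) u = 0) ∨
      (tlDeg E u ≠ 2 ∧ tlLeftDeg E (med u) u ≤ tlRightDeg E (med u) u ∧
        tlRightDeg E (med u) u ≤ tlLeftDeg E (med u) u + 1 ∧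
        tlRightDeg E (med u) u ≤ 2 * tlLeftDeg E (med u) u) := by
  have hsum := hmed.tlLeftDeg_add_tlRightDeg u
  have h := (hmed u).2
  split_ifs at h with hu
  · exact Or.inl ⟨hu, h, by unfold tlLeftDeg at *; omega⟩
  · exact Or.inr ⟨hu, by unfold tlLeftDeg at *; omega⟩

variable {z : X}

lemma tlRightDeg_le_tlLeftDeg_of_lt (hmed : tlMedianA E med) {u : Y} (hz : med u < z) :
    tlRightDeg E z u ≤ tlLeftDeg E z u := by
  have := tlLeftDeg_lt_of_lt (hmed u).1 hz
  have := tlRightDeg_anti E u hz.le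
  rcases hmed.balance u with h | h <;> omega

lemma tlLeftDeg_le_tlRightDeg_of_lt (hmed : tlMedianA E med) {u : Y} (hz : z < med u) :
    tlLeftDeg E z u ≤ tlRightDeg E z u := by
  have := tlRightDeg_lt_of_lt (hmed u).1 hz
  have := tlLeftDeg_mono E u hz.le
  rcases hmed.balance u with h | h <;> omega

lemma tlDeg_le_two_mul_tlLeftDeg (hmed : tlMedianA E med) {u : Y} (hz : med u < z) :
    tlDeg E u ≤ 2 * tlLeftDeg E z u := by
  have := tlLeftDeg_lt_of_lt (hmed u).1 hz
  have := hmed.tlLeftDeg_add_tlRightDeg u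
  rcases hmed.balance u with h | h <;> omega

lemma tlDeg_le_two_mul_tlRightDeg (hmed : tlMedianA E med) {u : Y} (hz : z < med u) :
    tlDeg E u ≤ 2 * tlRightDeg E z u := by
  have := tlRightDeg_lt_of_lt (hmed u).1 hz
  have := hmed.tlLeftDeg_add_tlRightDeg u
  rcases hmed.balance u with h | h <;> omega

end tlMedianA

end Median

section VariantA

variable {X Y : Type*} [LinearOrder X] {E : Finset (X × Y)} {med heavy : Y → X} {ordA : Y → ℕ}

namespace tlVariantA

lemma med_le_of_lt (hA : tlVariantA E med heavy ordA) {u v : Y} (h : ordA u < ordA v) :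
    med u ≤ med v :=
  le_of_not_gt fun hm => (hA.2.1 v u hm).asymm h

lemma tlDeg_eq_two_of_lt (hA : tlVariantA E med heavy ordA) {u v : Y} (h : ordA u < ordA v)
    (hm : med u = med v) (hv : tlDeg E v = 2) : tlDeg E u = 2 := by
  rw [← tlRank_eq_zero_iff] at hv ⊢
  by_contra hu
  exact (hA.2.2.1 v u hm.symm (by omega)).asymm h

end tlVariantA

variable {x : X} {y : Y}

lemma tlChargeable_of_lt_med (hmed : tlMedianA E med) (hA : tlVariantA E med heavy ordA)
    (hx : x ∈ tlNbrs E y) (hxm : x < med y) {M : X} (hM : ∀ w ∈ tlNbrs E y, w ≤ M) :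
    tlChargeable E ordA y x M M := by
  intro u
  refine ⟨fun hu => ?_, fun hu => ?_⟩
  · have hmu := hA.med_le_of_lt hu
    have hyM := hM _ (hmed y).1
    have := tlRightDeg_le_tlDeg E x u
    rcases (hmu.trans hyM).lt_or_eq with hlt | heq
    · have := hmed.tlDeg_le_two_mul_tlLeftDeg hlt
      omega
    · -- `med y` is the last neighbour of `y` but not its first, so `y` is a 2-vertex,
      -- and the tie-breaking makes `u` one as well
      have hmy : med y = M := le_antisymm hyM (heq ▸ hmu)
      have hR : tlRightDeg E (med y) y = 0 := tlRightDeg_eq_zero (hmy ▸ hM)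
      have hL := tlLeftDeg_lt_of_lt hx hxm
      have hy2 : tlDeg E y = 2 := by rcases hmed.balance y with h | h <;> omega
      have hu2 := hA.tlDeg_eq_two_of_lt hu (heq.trans hmy.symm) hy2
      rw [← heq]
      rcases hmed.balance u with h | h <;> omega
  · have := hmed.tlLeftDeg_le_tlRightDeg_of_lt (hxm.trans_le (hA.med_le_of_lt hu))
    omega

lemma tlChargeable_of_eq_med (hmed : tlMedianA E med) (hA : tlVariantA E med heavy ordA)
    {μ : X} (hμ : ∀ w ∈ tlNbrs E y, μ ≤ w) :
    tlChargeable E ordA y (med y) (med y) μ := by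
  intro u
  refine ⟨fun hu => ?_, fun hu => ?_⟩
  · rcases (hA.med_le_of_lt hu).lt_or_eq with hlt | heq
    · have := hmed.tlRightDeg_le_tlLeftDeg_of_lt hlt
      omega
    · rw [← heq]
      rcases hmed.balance u with h | h <;> omega
  · rcases (hA.med_le_of_lt hu).lt_or_eq with hlt | heq
    · have := hmed.tlLeftDeg_le_tlRightDeg_of_lt hlt
      omega
    · rw [heq]
      rcases hmed.balance u with ⟨hu2, hL, hR⟩ | h
      · -- both are 2-vertices, so `y` has a neighbour before its median, to the left of `med u`
        have hy2 := hA.tlDeg_eq_two_of_lt hu heq hu2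
        have hμm : μ < med u := by
          refine heq ▸ (hμ _ (hmed y).1).lt_of_ne fun hμy => ?_
          have := tlLeftDeg_eq_zero (hμy ▸ hμ)
          rcases hmed.balance y with h | h <;> omega
        have := tlRightDeg_lt_of_lt (hmed u).1 hμm
        omega
      · omega

lemma tlChargeable_of_med_lt (hmed : tlMedianA E med) (hA : tlVariantA E med heavy ordA)
    (hx : x ∈ tlNbrs E y) (hxm : med y < x) {μ : X} (hμ : ∀ w ∈ tlNbrs E y, μ ≤ w) :
    tlChargeable E ordA y x μ μ := by
  intro u
  refine ⟨fun hu => ?_, fun hu => ?_⟩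
  · have := hmed.tlRightDeg_le_tlLeftDeg_of_lt ((hA.med_le_of_lt hu).trans_lt hxm)
    omega
  · have hmu := hA.med_le_of_lt hu
    have hμy := hμ _ (hmed y).1
    have := tlLeftDeg_le_tlDeg E x u
    rcases (hμy.trans hmu).lt_or_eq with hlt | heq
    · have := hmed.tlDeg_le_two_mul_tlRightDeg hlt
      omega
    · -- otherwise `med y` would be the only neighbour of `y`, yet `x` lies to its right
      have hmy : μ = med y := le_antisymm hμy (heq ▸ hmu)
      have hL : tlLeftDeg E (med y) y = 0 := tlLeftDeg_eq_zero (hmy ▸ hμ)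
      have hR := tlRightDeg_lt_of_lt hx hxm
      rcases hmed.balance y with h | h <;> omega

lemma exists_tlChargeable (hmed : tlMedianA E med) (hA : tlVariantA E med heavy ordA)
    (hx : x ∈ tlNbrs E y) :
    ∃ a ∈ tlNbrs E y, ∃ b ∈ tlNbrs E y, tlChargeable E ordA y x a b := by
  have hne : (tlNbrs E y).Nonempty := ⟨x, hx⟩
  have hmin := min'_mem _ hne
  have hmax := max'_mem _ hne
  rcases lt_trichotomy x (med y) with hxm | rfl | hxm
  · exact ⟨_, hmax, _, hmax, tlChargeable_of_lt_med hmed hA hx hxm fun w => le_max' _ w⟩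
  · exact ⟨_, hx, _, hmin, tlChargeable_of_eq_med hmed hA fun w => min'_le _ w⟩
  · exact ⟨_, hmin, _, hmin, tlChargeable_of_med_lt hmed hA hx hxm fun w => min'_le _ w⟩

end VariantA

theorem variantA_is_3_approximation_general
    {X Y : Type*} [LinearOrder X]
    (E : Finset (X × Y)) (k : ℕ)
    (med heavy : Y → X) (ordA : Y → ℕ)
    (hmed : tlMedianA E med)
    (hordA : tlVariantA E med heavy ordA)
    (hk : tlOslcr E k) :
    tlLcr E ordA ≤ 3 * k := by
  obtain ⟨⟨σ, hσ, rfl⟩, -⟩ := hk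
  refine Finset.sup_le fun ⟨x, y⟩ he => ?_
  obtain ⟨a, ha, b, hb, hab⟩ := exists_tlChargeable hmed hordA (mem_tlNbrs.2 he)
  have hcr : ∀ g ∈ E, tlCrN E σ g ≤ tlLcr E σ := fun _ hg => le_sup hg
  calc tlCrN E ordA (x, y)
      ≤ tlCrN E σ (x, y) + tlCrN E σ (a, y) + tlCrN E σ (b, y) :=
        tlCrN_le_of_tlChargeable hσ hab
    _ ≤ 3 * tlLcr E σ := by
        have := hcr _ he
        have := hcr _ (mem_tlNbrs.1 ha)
        have := hcr _ (mem_tlNbrs.1 hb)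
        omega

/-- If the one-sided local crossing number of `(G, <ₓ)` is `k` (every vertex of
`Y` having degree at least 1), then the 2-layer drawing returned by variant `A`
of the median heuristic has local crossing number at most `3k`: variant `A` is a
3-approximation for One-Sided Local Crossing Minimization. -/
theorem variantA_is_3_approximation
    {X Y : Type*} [LinearOrder X]
    (E : Finset (X × Y)) (k : ℕ)
    (hdeg : ∀ y : Y, 1 ≤ tlDeg E y)
    (med heavy : Y → X) (ordA : Y → ℕ)
    (hmed : tlMedianA E med) (hheavy : tlHeavyNbr E med heavy)
    (hordA : tlVariantA E med heavy ordA)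
    (hk : tlOslcr E k) :
    tlLcr E ordA ≤ 3 * k :=
  variantA_is_3_approximation_general E k med heavy ordA hmed hordA hk
end
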